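/- Let C and D be Z-type complexes over 𝔽₂, let V be a common separated logical operator subcomplex of C (determined by u) and of D (determined by v), and let Q be the Z̄-merged complex. Then the cosystolic distance of the merged code satisfies d^X(Q) ≥ min(d^X(C), d^X(D)). -/

import Mathlib

/-!
STATEMENT 8: For a separated Z̄-merge of Z-type complexes C and D along a
common logical operator subcomplex V, the cosystolic distance of the merged
code satisfies d^X(Q) ≥ min(d^X(C), d^X(D)): every X-logical of Q has Hamming
weight (in the canonical glued basis of Q₀) at least that of some X-logical
of C or of D.
-/

abbrev F2 := ZMod 2

/-- Coordinate inclusion of 𝔽₂^α into 𝔽₂^β along an embedding ι : α ↪ β. -/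
noncomputable def incl {α β : Type} [Fintype α] [DecidableEq β] (ι : α ↪ β) :
    (α → F2) →ₗ[F2] (β → F2) :=
  Matrix.mulVecLin (Matrix.of fun j i => if j = ι i then 1 else 0)

/-- Pushforward of 𝔽₂-valued functions along a map of index sets. -/
noncomputable def pushf {α β : Type} [Fintype α] [DecidableEq β] (p : α → β) :
    (α → F2) →ₗ[F2] (β → F2) :=
  Matrix.mulVecLin (Matrix.of fun q j => if p j = q then 1 else 0)

/-- Hamming weight of a vector in 𝔽₂^α. -/
def wtv {α : Type} [Fintype α] (y : α → F2) : ℕ :=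
  (Finset.univ.filter fun j => y j ≠ 0).card

/-- Standard 𝔽₂ dot product. -/
def dotP {α : Type} [Fintype α] (x y : α → F2) : F2 := ∑ j, x j * y j

/-- The glued index set of the merged code: the qubits of C together with the
qubits of D not in the support of v. -/
abbrev MergedIdx {SD0 T0 : Type} (SC0 : Type) (ιD : T0 ↪ SD0) : Type :=
  SC0 ⊕ {j : SD0 // j ∉ Set.range ιD}

noncomputable instance {SD0 T0 : Type} [Fintype SD0] (ιD : T0 ↪ SD0) :
    Fintype {j : SD0 // j ∉ Set.range ιD} := Fintype.ofFinite _

open Classical in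
/-- The identification of the qubits of D with glued qubits: a qubit in the
support of v is sent to the corresponding qubit in the support of u. -/
noncomputable def glueD {SC0 SD0 T0 : Type} (ιC : T0 ↪ SC0) (ιD : T0 ↪ SD0)
    (j : SD0) : MergedIdx SC0 ιD :=
  if h : j ∈ Set.range ιD then Sum.inl (ιC (Set.mem_range.mp h).choose)
  else Sum.inr ⟨j, h⟩

/-- The coequalizer map (C₀ ⊕ D₀) → Q₀ realizing the merged qubit space
concretely on the glued index set. -/
noncomputable def mergeCoeq0 {SC0 SD0 T0 : Type} [Fintype SC0] [Fintype SD0] [Fintype T0]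
    [DecidableEq SC0] [DecidableEq SD0]
    (ιC : T0 ↪ SC0) (ιD : T0 ↪ SD0) :
    ((SC0 → F2) × (SD0 → F2)) →ₗ[F2] (MergedIdx SC0 ιD → F2) :=
  (pushf (Sum.inl : SC0 → MergedIdx SC0 ιD) ∘ₗ LinearMap.fst F2 (SC0 → F2) (SD0 → F2)) +
  (pushf (glueD ιC ιD) ∘ₗ LinearMap.snd F2 (SC0 → F2) (SD0 → F2))

/-!
An X-cocycle `y` of the merged code restricts, along the two coordinate maps `C₀ → Q₀` and
`D₀ → Q₀`, to X-cocycles of `C` and of `D`; both maps are injective on coordinates, so neither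
restriction is heavier than `y`. If both restrictions were coboundaries, say of `ψ_C` and `ψ_D`,
then `ψ_C + ψ_D` would vanish on the glued relations `(∂^C s, ∂^D s)`, `s ∈ V₀`, because the two
restrictions agree on the support of the logical and `1 + 1 = 0`; so it would descend to `Q₋₁`
and exhibit `y` as a coboundary of `Q`.
-/

def IsCocycle {N S : Type} [Fintype S] [AddCommGroup N] [Module F2 N]
    (d : N →ₗ[F2] (S → F2)) (y : S → F2) : Prop :=
  ∀ x, dotP (d x) y = 0

def IsCoboundary {S M : Type} [Fintype S] [AddCommGroup M] [Module F2 M]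
    (d : (S → F2) →ₗ[F2] M) (y : S → F2) : Prop :=
  ∃ ψ : M →ₗ[F2] F2, ∀ w, dotP w y = ψ (d w)

section Coordinates

variable {α β : Type} [Fintype α]

@[simp]
lemma dotP_zero_left (y : α → F2) : dotP 0 y = 0 := by
  simp [dotP]

lemma dotP_add_left (x x' y : α → F2) : dotP (x + x') y = dotP x y + dotP x' y := by
  simp [dotP, add_mul, Finset.sum_add_distrib]

lemma dotP_pushf [Fintype β] [DecidableEq β] (p : α → β) (a : α → F2) (y : β → F2) :
    dotP (pushf p a) y = dotP a (y ∘ p) := by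
  simp only [dotP, pushf, Matrix.mulVecLin_apply, Matrix.mulVec, dotProduct,
    Matrix.of_apply, Finset.sum_mul]
  rw [Finset.sum_comm]
  simp [Finset.sum_ite_eq, mul_comm]

lemma pushf_single [DecidableEq α] [DecidableEq β] (p : α → β) (j : α) (c : F2) :
    pushf p (Pi.single j c) = Pi.single (p j) c := by
  ext q
  simp [pushf, Matrix.mulVec, dotProduct, Pi.single_apply, eq_comm]

lemma incl_eq_pushf [DecidableEq β] (ι : α ↪ β) : incl ι = pushf ι := by
  ext
  simp [incl, pushf, Matrix.mulVec, dotProduct, eq_comm]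

lemma wtv_comp_le_of_injective [Fintype β] {p : α → β} (hp : Function.Injective p) (y : β → F2) :
    wtv (y ∘ p) ≤ wtv y :=
  Finset.card_le_card_of_injOn p (fun j hj => by simpa using hj) hp.injOn

end Coordinates

section Gluing

variable {SC0 SD0 T0 : Type} (ιC : T0 ↪ SC0) (ιD : T0 ↪ SD0)

lemma glueD_of_not_mem_range {j : SD0} (h : j ∉ Set.range ιD) :
    glueD ιC ιD j = Sum.inr ⟨j, h⟩ :=
  dif_neg h

lemma glueD_apply_embedding (t : T0) : glueD ιC ιD (ιD t) = Sum.inl (ιC t) := by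
  have h : ιD t ∈ Set.range ιD := ⟨t, rfl⟩
  rw [glueD, dif_pos h, ιD.injective (Set.mem_range.mp h).choose_spec]

lemma glueD_comp_embedding : glueD ιC ιD ∘ ιD = Sum.inl ∘ ιC :=
  funext (glueD_apply_embedding ιC ιD)

lemma glueD_injective : Function.Injective (glueD ιC ιD) := by
  intro j j' h
  by_cases hj : j ∈ Set.range ιD <;> by_cases hj' : j' ∈ Set.range ιD
  · obtain ⟨t, rfl⟩ := hj
    obtain ⟨t', rfl⟩ := hj'
    rw [glueD_apply_embedding, glueD_apply_embedding, Sum.inl.injEq] at h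
    rw [ιC.injective h]
  · obtain ⟨t, rfl⟩ := hj
    rw [glueD_apply_embedding, glueD_of_not_mem_range ιC ιD hj'] at h
    cases h
  · obtain ⟨t', rfl⟩ := hj'
    rw [glueD_apply_embedding, glueD_of_not_mem_range ιC ιD hj] at h
    cases h
  · rw [glueD_of_not_mem_range ιC ιD hj, glueD_of_not_mem_range ιC ιD hj'] at h
    simpa using h

lemma exists_eq_inl_or_eq_glueD (q : MergedIdx SC0 ιD) :
    (∃ i, q = Sum.inl i) ∨ ∃ j, q = glueD ιC ιD j := by
  rcases q with i | ⟨j, hj⟩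
  · exact Or.inl ⟨i, rfl⟩
  · exact Or.inr ⟨j, (glueD_of_not_mem_range ιC ιD hj).symm⟩

variable [Fintype SC0] [Fintype SD0] [Fintype T0] [DecidableEq SC0] [DecidableEq SD0]

lemma dotP_mergeCoeq0 (a : SC0 → F2) (b : SD0 → F2) (y : MergedIdx SC0 ιD → F2) :
    dotP (mergeCoeq0 ιC ιD (a, b)) y = dotP a (y ∘ Sum.inl) + dotP b (y ∘ glueD ιC ιD) := by
  simp only [mergeCoeq0, LinearMap.add_apply, LinearMap.comp_apply, LinearMap.fst_apply,
    LinearMap.snd_apply, dotP_add_left, dotP_pushf]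

lemma mergeCoeq0_surjective : Function.Surjective (mergeCoeq0 ιC ιD) := by
  classical
  rw [← LinearMap.range_eq_top, eq_top_iff, ← (Pi.basisFun F2 _).span_eq, Submodule.span_le]
  rintro _ ⟨q, rfl⟩
  rcases exists_eq_inl_or_eq_glueD ιC ιD q with ⟨i, rfl⟩ | ⟨j, rfl⟩
  · exact ⟨(Pi.single i 1, 0), by simp [mergeCoeq0, pushf_single]⟩
  · exact ⟨(0, Pi.single j 1), by simp [mergeCoeq0, pushf_single]⟩

lemma IsCocycle.comp_inl {N M : Type} [AddCommGroup N] [Module F2 N]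
    [AddCommGroup M] [Module F2 M] {dC : N →ₗ[F2] (SC0 → F2)} {dD : M →ₗ[F2] (SD0 → F2)}
    {y : MergedIdx SC0 ιD → F2} (hy : IsCocycle (mergeCoeq0 ιC ιD ∘ₗ dC.prodMap dD) y) :
    IsCocycle dC (y ∘ Sum.inl) := fun x => by
  simpa [dotP_mergeCoeq0] using hy (x, 0)

lemma IsCocycle.comp_glueD {N M : Type} [AddCommGroup N] [Module F2 N]
    [AddCommGroup M] [Module F2 M] {dC : N →ₗ[F2] (SC0 → F2)} {dD : M →ₗ[F2] (SD0 → F2)}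
    {y : MergedIdx SC0 ιD → F2} (hy : IsCocycle (mergeCoeq0 ιC ιD ∘ₗ dC.prodMap dD) y) :
    IsCocycle dD (y ∘ glueD ιC ιD) := fun x => by
  simpa [dotP_mergeCoeq0] using hy (0, x)

lemma isCoboundary_of_comp_inl_of_comp_glueD {MC MD : Type} [AddCommGroup MC] [Module F2 MC]
    [AddCommGroup MD] [Module F2 MD] {dC : (SC0 → F2) →ₗ[F2] MC} {dD : (SD0 → F2) →ₗ[F2] MD}
    {dQ : (MergedIdx SC0 ιD → F2) →ₗ[F2]
      (MC × MD) ⧸ LinearMap.range ((dC ∘ₗ incl ιC).prod (dD ∘ₗ incl ιD))}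
    (hdQ : dQ ∘ₗ mergeCoeq0 ιC ιD =
      (LinearMap.range ((dC ∘ₗ incl ιC).prod (dD ∘ₗ incl ιD))).mkQ ∘ₗ dC.prodMap dD)
    {y : MergedIdx SC0 ιD → F2} (hC : IsCoboundary dC (y ∘ Sum.inl))
    (hD : IsCoboundary dD (y ∘ glueD ιC ιD)) :
    IsCoboundary dQ y := by
  obtain ⟨ψC, hψC⟩ := hC
  obtain ⟨ψD, hψD⟩ := hD
  have hglued : LinearMap.range ((dC ∘ₗ incl ιC).prod (dD ∘ₗ incl ιD)) ≤
      LinearMap.ker (ψC.coprod ψD) := by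
    rintro _ ⟨s, rfl⟩
    change ψC (dC (incl ιC s)) + ψD (dD (incl ιD s)) = 0
    rw [← hψC, ← hψD, incl_eq_pushf, incl_eq_pushf, dotP_pushf, dotP_pushf, Function.comp_assoc,
      Function.comp_assoc, glueD_comp_embedding]
    exact CharTwo.add_self_eq_zero (R := F2) _
  refine ⟨Submodule.liftQ _ (ψC.coprod ψD) hglued, fun z => ?_⟩
  obtain ⟨⟨a, b⟩, rfl⟩ := mergeCoeq0_surjective ιC ιD z
  rw [dotP_mergeCoeq0, ← LinearMap.comp_apply dQ, hdQ]
  simp [hψC, hψD]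

end Gluing

theorem separated_Zbar_merge_cosystolic_distance
    {SC1 SC0 SCm SD1 SD0 SDm T0 : Type}
    [Fintype SC0] [Fintype SD0] [Fintype T0] [DecidableEq SC0] [DecidableEq SD0]
    (dC0 : (SC1 → F2) →ₗ[F2] (SC0 → F2)) (dCm : (SC0 → F2) →ₗ[F2] (SCm → F2))
    (dD0 : (SD1 → F2) →ₗ[F2] (SD0 → F2)) (dDm : (SD0 → F2) →ₗ[F2] (SDm → F2))
    (ιC : T0 ↪ SC0) (ιD : T0 ↪ SD0)
    -- the induced differential ∂₋₁^Q on the concretely realized Q₀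
    (dQm : (MergedIdx SC0 ιD → F2) →ₗ[F2]
      (((SCm → F2) × (SDm → F2)) ⧸
        LinearMap.range ((dCm ∘ₗ incl ιC).prod (dDm ∘ₗ incl ιD))))
    (hdQm : dQm ∘ₗ mergeCoeq0 ιC ιD =
      (LinearMap.range ((dCm ∘ₗ incl ιC).prod (dDm ∘ₗ incl ιD))).mkQ ∘ₗ
        (dCm.prodMap dDm)) :
    -- d^X(Q) ≥ min (d^X(C), d^X(D))
    ∀ y : MergedIdx SC0 ιD → F2,
      -- y is an X-cocycle of Q ...
      (∀ x : (SC1 → F2) × (SD1 → F2),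
        dotP (mergeCoeq0 ιC ιD ((dC0.prodMap dD0) x)) y = 0) →
      -- ... which is not an X-coboundary of Q
      (¬ ∃ ψ : (((SCm → F2) × (SDm → F2)) ⧸
            LinearMap.range ((dCm ∘ₗ incl ιC).prod (dDm ∘ₗ incl ιD))) →ₗ[F2] F2,
          ∀ z : MergedIdx SC0 ιD → F2, dotP z y = ψ (dQm z)) →
      -- ... dominates in weight some X-logical of C or of D
      (∃ z : SC0 → F2,
        ((∀ x : SC1 → F2, dotP (dC0 x) z = 0) ∧
          ¬ ∃ ψ : (SCm → F2) →ₗ[F2] F2, ∀ w : SC0 → F2, dotP w z = ψ (dCm w)) ∧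
        wtv z ≤ wtv y) ∨
      (∃ z : SD0 → F2,
        ((∀ x : SD1 → F2, dotP (dD0 x) z = 0) ∧
          ¬ ∃ ψ : (SDm → F2) →ₗ[F2] F2, ∀ w : SD0 → F2, dotP w z = ψ (dDm w)) ∧
        wtv z ≤ wtv y) := by
  intro y (hcocycle : IsCocycle (mergeCoeq0 ιC ιD ∘ₗ dC0.prodMap dD0) y) hnot_coboundary
  by_cases hC : IsCoboundary dCm (y ∘ Sum.inl)
  · by_cases hD : IsCoboundary dDm (y ∘ glueD ιC ιD)
    · exact absurd (isCoboundary_of_comp_inl_of_comp_glueD ιC ιD hdQm hC hD) hnot_coboundary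
    · exact Or.inr ⟨_, ⟨hcocycle.comp_glueD, hD⟩,
        wtv_comp_le_of_injective (glueD_injective ιC ιD) y⟩
  · exact Or.inl ⟨_, ⟨hcocycle.comp_inl, hC⟩, wtv_comp_le_of_injective Sum.inl_injective y⟩
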